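/- For the greedy deterministic Zeckendorf game (always moving on the largest available summand), the number of moves m(n) satisfies m(n+1) + Z(n+1) = m(n) + Z(n) + 1 for all n ≥ 1, where Z(n) is the number of terms in the Zeckendorf decomposition of n; consequently m(n) = n − Z(n). -/

import Mathlib

/-- Fibonacci numbers indexed `F_1 = 1, F_2 = 2, F_{i+1} = F_i + F_{i-1}`. -/
def ZFib (i : ℕ) : ℕ := Nat.fib (i + 1)

/-- Legal moves of the Zeckendorf game, on multisets of Fibonacci indices. -/
inductive ZMove : Multiset ℕ → Multiset ℕ → Prop
  | combine (s : Multiset ℕ) (i : ℕ) (h : 2 ≤ i) :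
      ZMove ((i - 1) ::ₘ i ::ₘ s) ((i + 1) ::ₘ s)
  | addOnes (s : Multiset ℕ) :
      ZMove (1 ::ₘ 1 ::ₘ s) (2 ::ₘ s)
  | splitTwos (s : Multiset ℕ) :
      ZMove (2 ::ₘ 2 ::ₘ s) (1 ::ₘ 3 ::ₘ s)
  | split (s : Multiset ℕ) (i : ℕ) (h : 3 ≤ i) :
      ZMove (i ::ₘ i ::ₘ s) ((i - 2) ::ₘ (i + 1) ::ₘ s)

/-- `ZMoveAt i s t`: a legal move from `s` to `t` whose largest consumed
index is `i` (the summand acted on). -/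
inductive ZMoveAt : ℕ → Multiset ℕ → Multiset ℕ → Prop
  | combine (s : Multiset ℕ) (i : ℕ) (h : 2 ≤ i) :
      ZMoveAt i ((i - 1) ::ₘ i ::ₘ s) ((i + 1) ::ₘ s)
  | addOnes (s : Multiset ℕ) :
      ZMoveAt 1 (1 ::ₘ 1 ::ₘ s) (2 ::ₘ s)
  | splitTwos (s : Multiset ℕ) :
      ZMoveAt 2 (2 ::ₘ 2 ::ₘ s) (1 ::ₘ 3 ::ₘ s)
  | split (s : Multiset ℕ) (i : ℕ) (h : 3 ≤ i) :
      ZMoveAt i (i ::ₘ i ::ₘ s) ((i - 2) ::ₘ (i + 1) ::ₘ s)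

/-- A greedy move: a legal move acting on the largest-valued summand that
admits a move. -/
def GreedyMove (s t : Multiset ℕ) : Prop :=
  ∃ i, ZMoveAt i s t ∧ ∀ (j : ℕ) (t' : Multiset ℕ), ZMoveAt j s t' → j ≤ i

/-!
Under greedy play from `n` copies of `F_1`, only the index `1` is ever repeated: a combining move
on `F_{i-1} + F_i` (or `F_1 + F_1`, for `i = 1`) creates `F_{i+1}`, and if `F_{i+1}` were already
present the greedy player would have combined `F_i + F_{i+1}` instead. Hence no splitting move is
ever available, every move merges two summands into one, and the play ends in the Zeckendorf
decomposition after exactly `n - Z(n)` moves.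
-/

lemma zFib_sub_one_add_zFib {i : ℕ} (hi : 2 ≤ i) : ZFib (i - 1) + ZFib i = ZFib (i + 1) := by
  obtain ⟨k, rfl⟩ : ∃ k, i = k + 2 := ⟨i - 2, by omega⟩
  simp [ZFib, Nat.fib_add_two]

lemma two_mul_zFib {i : ℕ} (hi : 3 ≤ i) : 2 * ZFib i = ZFib (i - 2) + ZFib (i + 1) := by
  obtain ⟨k, rfl⟩ : ∃ k, i = k + 3 := ⟨i - 3, by omega⟩
  simp only [ZFib, show k + 3 - 2 = k + 1 by omega, Nat.fib_add_two]
  omega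

lemma ZMoveAt.zMove {i : ℕ} {s t : Multiset ℕ} (h : ZMoveAt i s t) : ZMove s t := by
  cases h with
  | combine s i hi => exact .combine s i hi
  | addOnes s => exact .addOnes s
  | splitTwos s => exact .splitTwos s
  | split s i hi => exact .split s i hi

lemma ZMoveAt.sum_map_zFib {i : ℕ} {s t : Multiset ℕ} (h : ZMoveAt i s t) :
    (t.map ZFib).sum = (s.map ZFib).sum := by
  cases h with
  | combine s i hi =>
    simp only [Multiset.map_cons, Multiset.sum_cons, ← zFib_sub_one_add_zFib hi]
    ring
  | addOnes s =>
    simp only [Multiset.map_cons, Multiset.sum_cons]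
    linarith [show ZFib 2 = ZFib 1 + ZFib 1 from rfl]
  | splitTwos s =>
    simp only [Multiset.map_cons, Multiset.sum_cons]
    linarith [show ZFib 1 + ZFib 3 = ZFib 2 + ZFib 2 from rfl]
  | split s i hi =>
    simp only [Multiset.map_cons, Multiset.sum_cons]
    linarith [two_mul_zFib hi]

lemma exists_zMoveAt_combine {i : ℕ} {s : Multiset ℕ} (hi : 2 ≤ i) (hpred : i - 1 ∈ s)
    (hmem : i ∈ s) : ∃ t, ZMoveAt i s t := by
  obtain ⟨u, rfl⟩ := Multiset.exists_cons_of_mem hmem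
  have : i - 1 ∈ u := (Multiset.mem_cons.1 hpred).resolve_left (by omega)
  obtain ⟨v, rfl⟩ := Multiset.exists_cons_of_mem this
  exact ⟨(i + 1) ::ₘ v, Multiset.cons_swap i (i - 1) v ▸ .combine v i hi⟩

def OnlyOnesRepeat (s : Multiset ℕ) : Prop :=
  (∀ i ∈ s, 1 ≤ i) ∧ ∀ j, 2 ≤ j → s.count j ≤ 1

namespace OnlyOnesRepeat

lemma replicate_one (n : ℕ) : OnlyOnesRepeat (Multiset.replicate n 1) := by
  refine ⟨fun i hi => (Multiset.eq_of_mem_replicate hi).ge, fun j hj => ?_⟩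
  rw [Multiset.count_replicate]
  split_ifs <;> omega

lemma mono {s t : Multiset ℕ} (hs : OnlyOnesRepeat s) (hts : t ≤ s) : OnlyOnesRepeat t :=
  ⟨fun i hi => hs.1 i (Multiset.mem_of_le hts hi),
    fun j hj => (Multiset.count_le_of_le j hts).trans (hs.2 j hj)⟩

lemma cons {s : Multiset ℕ} {k : ℕ} (hs : OnlyOnesRepeat s) (hk : 1 ≤ k) (hks : k ∉ s) :
    OnlyOnesRepeat (k ::ₘ s) := by
  refine ⟨fun i hi => (Multiset.mem_cons.1 hi).elim (· ▸ hk) (hs.1 i), fun j hj => ?_⟩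
  rcases eq_or_ne j k with rfl | hjk
  · simp [Multiset.count_eq_zero.2 hks]
  · simpa [Multiset.count_cons_of_ne hjk] using hs.2 j hj

lemma exists_eq_of_zMoveAt {s t : Multiset ℕ} {i : ℕ} (hs : OnlyOnesRepeat s)
    (h : ZMoveAt i s t) : 1 ≤ i ∧ ∃ a u, s = a ::ₘ i ::ₘ u ∧ t = (i + 1) ::ₘ u := by
  cases h with
  | combine u i hi => exact ⟨by omega, _, u, rfl, rfl⟩
  | addOnes u => exact ⟨le_rfl, 1, u, rfl, rfl⟩
  | splitTwos u => simpa using hs.2 2 le_rfl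
  | split u i hi => simpa using hs.2 i (by omega)

end OnlyOnesRepeat

namespace GreedyMove

variable {s t : Multiset ℕ}

lemma exists_eq (hs : OnlyOnesRepeat s) (hg : GreedyMove s t) :
    ∃ i a u, 1 ≤ i ∧ i + 1 ∉ u ∧ s = a ::ₘ i ::ₘ u ∧ t = (i + 1) ::ₘ u := by
  obtain ⟨i, hmove, hmax⟩ := hg
  obtain ⟨hi, a, u, rfl, rfl⟩ := hs.exists_eq_of_zMoveAt hmove
  refine ⟨i, a, u, hi, fun hu => ?_, rfl, rfl⟩
  obtain ⟨t', ht'⟩ := exists_zMoveAt_combine (i := i + 1) (s := a ::ₘ i ::ₘ u) (by omega)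
    (by simp) (by simp [hu])
  have := hmax _ _ ht'
  omega

lemma onlyOnesRepeat (hs : OnlyOnesRepeat s) (hg : GreedyMove s t) : OnlyOnesRepeat t := by
  obtain ⟨i, a, u, hi, hu, rfl, rfl⟩ := hg.exists_eq hs
  exact (hs.mono ((Multiset.le_cons_self _ _).trans (Multiset.le_cons_self _ _))).cons
    (by omega) hu

lemma card_add_one (hs : OnlyOnesRepeat s) (hg : GreedyMove s t) :
    Multiset.card t + 1 = Multiset.card s := by
  obtain ⟨i, a, u, -, -, rfl, rfl⟩ := hg.exists_eq hs
  simp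

lemma sum_map_zFib (hg : GreedyMove s t) : (t.map ZFib).sum = (s.map ZFib).sum :=
  hg.choose_spec.1.sum_map_zFib

end GreedyMove

lemma greedy_play_invariants {f : ℕ → Multiset ℕ} {M : ℕ} (h0 : OnlyOnesRepeat (f 0))
    (hstep : ∀ k < M, GreedyMove (f k) (f (k + 1))) :
    ∀ k ≤ M, OnlyOnesRepeat (f k) ∧ Multiset.card (f k) + k = Multiset.card (f 0) ∧
      ((f k).map ZFib).sum = ((f 0).map ZFib).sum := by
  intro k hk
  induction k with
  | zero => exact ⟨h0, rfl, rfl⟩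
  | succ k ih =>
    obtain ⟨hinv, hcard, hsum⟩ := ih (by omega)
    have hg := hstep k (by omega)
    refine ⟨hg.onlyOnesRepeat hinv, ?_, hg.sum_map_zFib.trans hsum⟩
    have := hg.card_add_one hinv
    omega

lemma succ_notMem_of_terminal {s : Multiset ℕ} (hpos : ∀ i ∈ s, 1 ≤ i)
    (hterm : ¬ ∃ t, ZMove s t) : ∀ i ∈ s, i + 1 ∉ s := by
  intro i hi hsucc
  obtain ⟨t, ht⟩ := exists_zMoveAt_combine (i := i + 1) (by linarith [hpos i hi]) (by simpa) hsucc
  exact hterm ⟨t, ht.zMove⟩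

lemma OnlyOnesRepeat.nodup_of_terminal {s : Multiset ℕ} (hs : OnlyOnesRepeat s)
    (hterm : ¬ ∃ t, ZMove s t) : s.Nodup := by
  rw [Multiset.nodup_iff_count_le_one]
  intro j
  by_contra! hj
  have hj1 : j = 1 := by
    have := hs.1 j (Multiset.count_pos.1 (by omega))
    have := hs.2 j
    omega
  subst hj1
  obtain ⟨u, rfl⟩ := Multiset.exists_cons_of_mem (Multiset.count_pos.1 (by omega : 0 < s.count 1))
  rw [Multiset.count_cons_self] at hj
  obtain ⟨v, rfl⟩ := Multiset.exists_cons_of_mem (Multiset.count_pos.1 (by omega : 0 < u.count 1))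
  exact hterm ⟨_, .addOnes v⟩

/-- For the greedy deterministic Zeckendorf game, if `m n` is the number of
moves of the greedy game on `n` and `Z n` the number of terms of the
Zeckendorf decomposition of `n`, then
`m(n+1) + Z(n+1) = m(n) + Z(n) + 1` for all `n ≥ 1`, and consequently
`m(n) = n - Z(n)`. -/
theorem greedy_game_length (m Z : ℕ → ℕ)
    (hZ : ∀ (n : ℕ) (s : Multiset ℕ), s.Nodup → (∀ i ∈ s, i + 1 ∉ s) →
      (∀ i ∈ s, 1 ≤ i) → (s.map ZFib).sum = n → Z n = Multiset.card s)
    (hm : ∀ n : ℕ, 1 ≤ n → ∃ f : ℕ → Multiset ℕ,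
      f 0 = Multiset.replicate n 1 ∧
      (∀ k < m n, GreedyMove (f k) (f (k + 1))) ∧
      ¬ ∃ t, ZMove (f (m n)) t) :
    ∀ n : ℕ, 1 ≤ n →
      m (n + 1) + Z (n + 1) = m n + Z n + 1 ∧ m n = n - Z n := by
  have moves_add_card : ∀ n : ℕ, 1 ≤ n → m n + Z n = n := by
    intro n hn
    obtain ⟨f, hf0, hstep, hterm⟩ := hm n hn
    have h0 : OnlyOnesRepeat (f 0) := hf0 ▸ OnlyOnesRepeat.replicate_one n
    obtain ⟨hinv, hcard, hsum⟩ := greedy_play_invariants h0 hstep (m n) le_rfl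
    have hZn := hZ n (f (m n)) (hinv.nodup_of_terminal hterm)
      (succ_notMem_of_terminal hinv.1 hterm) hinv.1
      (by simpa [hf0, show ZFib 1 = 1 from rfl] using hsum)
    simp only [hf0, Multiset.card_replicate] at hcard
    omega
  intro n hn
  have h1 := moves_add_card n hn
  have h2 := moves_add_card (n + 1) (by omega)
  omega
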